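/- (Convergence on the complete graph.) Let n ≥ 2, let A = [[a,b],[c,d]] satisfy c > a > d > 0 > b, let ε ∈ (0,1), and let x : ℕ → [0,1]ⁿ be the trajectory of the complete-graph imitation dynamics starting from x(0) ∈ [0,1]ⁿ, where x(t+1) is obtained from x(t) by the complete-graph imitation update with payoffs P_i(t) = Σ_{j≠i} u(x_i(t), x_j(t)). Then the strategies of all players converge to a common value, namely the minimal (least cooperative) initial strategy: for every player i, lim_{t→∞} x_i(t) = min_j x_j(0). -/
import Mathlib


/-- The pairwise payoff of a two-strategy game with payoff matrix
`A = [[a,b],[c,d]]`: `u x y = [x, 1-x]ᵀ A [y, 1-y]`. -/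
def pdPayoff (a b c d x y : ℝ) : ℝ :=
  a * x * y + b * x * (1 - y) + c * (1 - x) * y + d * (1 - x) * (1 - y)

/-- The total payoff to player `i` on the complete graph `Kₙ`:
`P_i = Σ_{j ≠ i} u(x_i, x_j)`. -/
noncomputable def completePayoff (n : ℕ) (a b c d : ℝ) (x : Fin n → ℝ) (i : Fin n) : ℝ :=
  ∑ j ∈ Finset.univ.erase i, pdPayoff a b c d (x i) (x j)

/-- One step of the complete-graph imitation update with step size `ε`:
`x_i ↦ x_i + ε·Σ_{j∈J_i} (P_j − P_i)(x_j − x_i) / Σ_{j∈J_i} (P_j − P_i)` where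
`J_i = {j : x_j < x_i}`; `x_i` is unchanged when `J_i` is empty. -/
noncomputable def imitationUpdate (n : ℕ) (a b c d ε : ℝ) (x : Fin n → ℝ) (i : Fin n) : ℝ :=
  if (Finset.univ.filter (fun j => x j < x i)).Nonempty then
    x i + ε * (∑ j ∈ Finset.univ.filter (fun j => x j < x i),
          (completePayoff n a b c d x j - completePayoff n a b c d x i) * (x j - x i)) /
        (∑ j ∈ Finset.univ.filter (fun j => x j < x i),
          (completePayoff n a b c d x j - completePayoff n a b c d x i))
  else x i

lemma payoff_diff (n : ℕ) (a b c d : ℝ) (y : Fin n → ℝ) {i j : Fin n} (hij : j ≠ i) :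
    completePayoff n a b c d y j - completePayoff n a b c d y i =
      (y i - y j) * ((c - b) + ∑ k ∈ (Finset.univ.erase i).erase j,
        ((c - a) * y k + (d - b) * (1 - y k))) := by
  classical
  have hji : i ≠ j := hij.symm
  rw [completePayoff, completePayoff,
    ← Finset.sum_erase_add _ _ (Finset.mem_erase.mpr ⟨hji, Finset.mem_univ i⟩),
    ← Finset.sum_erase_add _ _ (Finset.mem_erase.mpr ⟨hij, Finset.mem_univ j⟩),
    Finset.erase_right_comm]
  have key : ∑ k ∈ (Finset.univ.erase i).erase j, pdPayoff a b c d (y j) (y k)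
      - ∑ k ∈ (Finset.univ.erase i).erase j, pdPayoff a b c d (y i) (y k)
      = (y i - y j) * ∑ k ∈ (Finset.univ.erase i).erase j,
          ((c - a) * y k + (d - b) * (1 - y k)) := by
    rw [← Finset.sum_sub_distrib, Finset.mul_sum]
    exact Finset.sum_congr rfl fun k _ => by simp only [pdPayoff]; ring
  have cross : pdPayoff a b c d (y j) (y i) - pdPayoff a b c d (y i) (y j)
      = (y i - y j) * (c - b) := by simp only [pdPayoff]; ring
  rw [mul_add]
  linarith [key, cross]

lemma step_lemma (n : ℕ) (hn : 2 ≤ n) (a b c d : ℝ)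
    (hca : c > a) (had : a > d) (hd : d > 0) (hb : (0 : ℝ) > b)
    (ε : ℝ) (hε0 : 0 < ε) (hε1 : ε < 1)
    (m : ℝ) (hm : 0 ≤ m) (y : Fin n → ℝ) (hy : ∀ k, m ≤ y k ∧ y k ≤ 1)
    (i₀ : Fin n) (hi₀ : y i₀ = m) (i : Fin n) :
    m ≤ imitationUpdate n a b c d ε y i ∧
    imitationUpdate n a b c d ε y i - m ≤
      (1 - ε * ((c - b) / ((n : ℝ) * ((c - b) + ((n : ℝ) - 2) * ((c - a) + (d - b)))))) *
        (y i - m) := by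
  classical
  set U : ℝ := (c - b) + ((n : ℝ) - 2) * ((c - a) + (d - b)) with hUdef
  set L : ℝ := c - b with hLdef
  have hn2 : (2 : ℝ) ≤ (n : ℝ) := by exact_mod_cast hn
  have hL : 0 < L := by simp only [hLdef]; linarith
  have hLU : L ≤ U := by
    have : 0 ≤ ((n : ℝ) - 2) * ((c - a) + (d - b)) := by
      apply mul_nonneg <;> linarith
    simp only [hUdef]; linarith
  have hU : 0 < U := lt_of_lt_of_le hL hLU
  have hnU : 0 < (n : ℝ) * U := by positivity
  set c₀ : ℝ := L / ((n : ℝ) * U) with hc₀def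
  have hc₀ : 0 < c₀ := div_pos hL hnU
  have hc₀nU : c₀ * ((n : ℝ) * U) = L := div_mul_cancel₀ _ (ne_of_gt hnU)
  rw [imitationUpdate]
  by_cases hJ : (Finset.univ.filter (fun j => y j < y i)).Nonempty
  · rw [if_pos hJ]
    set J := Finset.univ.filter (fun j => y j < y i) with hJdef
    -- y i > m
    obtain ⟨j₁, hj₁⟩ := hJ
    have hj₁lt : y j₁ < y i := (Finset.mem_filter.mp hj₁).2
    have hyi : m < y i := lt_of_le_of_lt (hy j₁).1 hj₁lt
    set δ : ℝ := y i - m with hδdef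
    have hδ : 0 < δ := by simp only [hδdef]; linarith
    have hi₀J : i₀ ∈ J := Finset.mem_filter.mpr ⟨Finset.mem_univ _, by rw [hi₀]; exact hyi⟩
    -- the coefficient C j
    set C : Fin n → ℝ := fun j => (c - b) + ∑ k ∈ (Finset.univ.erase i).erase j,
        ((c - a) * y k + (d - b) * (1 - y k)) with hCdef
    have hCL : ∀ j : Fin n, L ≤ C j := by
      intro j
      have : (0 : ℝ) ≤ ∑ k ∈ (Finset.univ.erase i).erase j,
          ((c - a) * y k + (d - b) * (1 - y k)) := by
        apply Finset.sum_nonneg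
        intro k _
        have h1 := (hy k).1
        have h2 := (hy k).2
        have : 0 ≤ y k := le_trans hm h1
        nlinarith
      simp only [hCdef, hLdef]; linarith
    have hCU : ∀ j ∈ J, C j ≤ U := by
      intro j hj
      have hji : j ≠ i := by
        intro h
        have := (Finset.mem_filter.mp hj).2
        rw [h] at this; exact lt_irrefl _ this
      have hcard : ((Finset.univ.erase i).erase j).card = n - 2 := by
        rw [Finset.card_erase_of_mem (Finset.mem_erase.mpr ⟨hji, Finset.mem_univ _⟩),
          Finset.card_erase_of_mem (Finset.mem_univ _), Finset.card_univ, Fintype.card_fin]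
        omega
      have hsum : ∑ k ∈ (Finset.univ.erase i).erase j, ((c - a) * y k + (d - b) * (1 - y k))
          ≤ ((n : ℝ) - 2) * ((c - a) + (d - b)) := by
        have := Finset.sum_le_card_nsmul ((Finset.univ.erase i).erase j)
          (fun k => (c - a) * y k + (d - b) * (1 - y k)) ((c - a) + (d - b))
          (by
            intro k _
            have h1 := (hy k).1
            have h2 := (hy k).2
            have h0 : 0 ≤ y k := le_trans hm h1
            nlinarith [mul_nonneg (by linarith : (0:ℝ) ≤ c - a) (by linarith : (0:ℝ) ≤ 1 - y k),
              mul_nonneg (by linarith : (0:ℝ) ≤ d - b) h0])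
        rw [hcard, nsmul_eq_mul] at this
        have hc : ((n - 2 : ℕ) : ℝ) = (n : ℝ) - 2 := by
          rw [Nat.cast_sub hn]; norm_num
        rw [hc] at this
        exact this
      simp only [hCdef, hUdef]; linarith
    -- rewrite payoff differences
    have hPdiff : ∀ j ∈ J, completePayoff n a b c d y j - completePayoff n a b c d y i
        = (y i - y j) * C j := by
      intro j hj
      have hji : j ≠ i := by
        intro h
        have := (Finset.mem_filter.mp hj).2
        rw [h] at this; exact lt_irrefl _ this
      exact payoff_diff n a b c d y hji
    have hyj : ∀ j ∈ J, m ≤ y j ∧ y j < y i := fun j hj =>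
      ⟨(hy j).1, (Finset.mem_filter.mp hj).2⟩
    set D : ℝ := ∑ j ∈ J, (completePayoff n a b c d y j - completePayoff n a b c d y i)
      with hDdef
    set N : ℝ := ∑ j ∈ J, (completePayoff n a b c d y j - completePayoff n a b c d y i)
      * (y j - y i) with hNdef
    have hDeq : D = ∑ j ∈ J, (y i - y j) * C j :=
      Finset.sum_congr rfl fun j hj => hPdiff j hj
    have hNeq : N = ∑ j ∈ J, ((y i - y j) * C j) * (y j - y i) :=
      Finset.sum_congr rfl fun j hj => by rw [hPdiff j hj]
    have hterm_pos : ∀ j ∈ J, 0 < (y i - y j) * C j := by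
      intro j hj
      exact mul_pos (by linarith [(hyj j hj).2]) (lt_of_lt_of_le hL (hCL j))
    have hDpos : 0 < D := by
      rw [hDeq]
      exact Finset.sum_pos hterm_pos ⟨j₁, hj₁⟩
    have hDle : D ≤ (n : ℝ) * U * δ := by
      rw [hDeq]
      calc ∑ j ∈ J, (y i - y j) * C j ≤ ∑ _j ∈ J, δ * U := by
            apply Finset.sum_le_sum
            intro j hj
            have h1 := (hyj j hj).1
            have h2 := (hyj j hj).2
            apply mul_le_mul
            · simp only [hδdef]; linarith
            · exact hCU j hj
            · linarith [hCL j]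
            · linarith
        _ = (J.card : ℝ) * (δ * U) := by rw [Finset.sum_const, nsmul_eq_mul]
        _ ≤ (n : ℝ) * (δ * U) := by
            apply mul_le_mul_of_nonneg_right _ (by positivity)
            have := Finset.card_le_univ J
            simp only [Finset.card_univ, Fintype.card_fin] at this
            exact_mod_cast this
        _ = (n : ℝ) * U * δ := by ring
    clear_value N D C J
    clear hNdef hDdef hCdef hJdef hPdiff
    have hN1 : N ≤ -(L * δ ^ 2) := by
      rw [hNeq, ← Finset.sum_erase_add _ _ hi₀J]
      have h1 : ((y i - y i₀) * C i₀) * (y i₀ - y i) ≤ -(L * δ ^ 2) := by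
        have : y i₀ = m := hi₀
        have hC := hCL i₀
        have : ((y i - y i₀) * C i₀) * (y i₀ - y i) = -(C i₀ * δ ^ 2) := by
          rw [hi₀]; simp only [hδdef]; ring
        rw [this]
        have : L * δ ^ 2 ≤ C i₀ * δ ^ 2 :=
          mul_le_mul_of_nonneg_right (hCL i₀) (sq_nonneg δ)
        linarith
      have h2 : ∑ j ∈ J.erase i₀, ((y i - y j) * C j) * (y j - y i) ≤ 0 := by
        apply Finset.sum_nonpos
        intro j hj
        have hjJ : j ∈ J := Finset.mem_of_mem_erase hj
        have hw := hterm_pos j hjJ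
        have hlt := (hyj j hjJ).2
        exact mul_nonpos_of_nonneg_of_nonpos hw.le (by linarith)
      linarith
    have hN2 : (m - y i) * D ≤ N := by
      rw [hNeq, hDeq, Finset.mul_sum]
      apply Finset.sum_le_sum
      intro j hj
      have hw := hterm_pos j hj
      have h1 := (hyj j hj).1
      calc (m - y i) * ((y i - y j) * C j) = ((y i - y j) * C j) * (m - y i) := by ring
        _ ≤ ((y i - y j) * C j) * (y j - y i) :=
            mul_le_mul_of_nonneg_left (by linarith) hw.le
    -- bounds on ε * N / D
    have hup : ε * N / D ≤ -(ε * c₀ * δ) := by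
      rw [div_le_iff₀ hDpos]
      have e1 : ε * N ≤ -(ε * L * δ ^ 2) := by
        have := mul_le_mul_of_nonneg_left hN1 hε0.le
        linarith
      have e2 : -(ε * c₀ * δ) * ((n : ℝ) * U * δ) ≤ -(ε * c₀ * δ) * D :=
        mul_le_mul_of_nonpos_left hDle (neg_nonpos.mpr (by positivity))
      have e3 : -(ε * c₀ * δ) * ((n : ℝ) * U * δ) = -(ε * L * δ ^ 2) := by
        rw [← hc₀nU]; ring
      linarith
    have hlo : ε * (m - y i) ≤ ε * N / D := by
      rw [le_div_iff₀ hDpos]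
      have := mul_le_mul_of_nonneg_left hN2 hε0.le
      linarith
    constructor
    · have hprod : (0:ℝ) ≤ (1 - ε) * (y i - m) :=
        mul_nonneg (by linarith) (by linarith)
      linarith [hlo, hprod]
    · linarith [hup]
  · rw [if_neg hJ]
    have hyi : y i = m := by
      have h1 : ¬ y i₀ < y i := by
        intro h
        exact hJ ⟨i₀, Finset.mem_filter.mpr ⟨Finset.mem_univ _, h⟩⟩
      have := (hy i).1
      rw [hi₀] at h1
      linarith [not_lt.mp h1]
    refine ⟨hyi.ge, ?_⟩
    rw [hyi]
    simp only [sub_self, mul_zero, le_refl]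

/-- Convergence on the complete graph: along any trajectory of the
complete-graph imitation dynamics starting in `[0,1]ⁿ`, the strategies of all
players converge to the minimal (least cooperative) initial strategy:
`lim_{t→∞} x_i(t) = min_j x_j(0)` for every player `i`. -/
theorem imitation_converges_to_min_initial_strategy
    (n : ℕ) (hn : 2 ≤ n)
    (a b c d : ℝ) (hca : c > a) (had : a > d) (hd : d > 0) (hb : (0 : ℝ) > b)
    (ε : ℝ) (hε : ε ∈ Set.Ioo (0 : ℝ) 1)
    (x : ℕ → Fin n → ℝ) (hx0 : ∀ i, x 0 i ∈ Set.Icc (0 : ℝ) 1)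
    (hrec : ∀ t i, x (t + 1) i = imitationUpdate n a b c d ε (x t) i) :
    ∀ i : Fin n,
      Filter.Tendsto (fun t => x t i) Filter.atTop
        (nhds (Finset.univ.inf' (Finset.univ_nonempty_iff.mpr ⟨⟨0, by omega⟩⟩) (x 0))) := by
  obtain ⟨hε0, hε1⟩ := hε
  have hne : (Finset.univ : Finset (Fin n)).Nonempty :=
    ⟨⟨0, by omega⟩, Finset.mem_univ _⟩
  intro i
  show Filter.Tendsto (fun t => x t i) Filter.atTop (nhds (Finset.univ.inf' hne (x 0)))
  set m : ℝ := Finset.univ.inf' hne (x 0) with hmdef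
  have hm0 : 0 ≤ m := Finset.le_inf' hne _ (fun j _ => (hx0 j).1)
  obtain ⟨i₀, -, hi₀⟩ := Finset.exists_mem_eq_inf' hne (x 0)
  have hminle : ∀ k, m ≤ x 0 k := fun k => Finset.inf'_le _ (Finset.mem_univ k)
  -- setup of the contraction constant
  set U : ℝ := (c - b) + ((n : ℝ) - 2) * ((c - a) + (d - b)) with hUdef
  set c₀ : ℝ := (c - b) / ((n : ℝ) * U) with hc₀def
  set q : ℝ := 1 - ε * c₀ with hqdef
  have hn2 : (2 : ℝ) ≤ (n : ℝ) := by exact_mod_cast hn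
  have hL : (0:ℝ) < c - b := by linarith
  have hLU : c - b ≤ U := by
    have : 0 ≤ ((n : ℝ) - 2) * ((c - a) + (d - b)) := by
      apply mul_nonneg <;> linarith
    simp only [hUdef]; linarith
  have hU : 0 < U := lt_of_lt_of_le hL hLU
  have hnU : 0 < (n : ℝ) * U := by positivity
  have hc₀pos : 0 < c₀ := div_pos hL hnU
  have hc₀half : c₀ ≤ 1 / 2 := by
    rw [hc₀def, div_le_iff₀ hnU]
    nlinarith [mul_le_mul_of_nonneg_right hn2 hU.le]
  have hq0 : 0 ≤ q := by
    have : ε * c₀ ≤ 1 * (1/2 : ℝ) :=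
      mul_le_mul hε1.le hc₀half hc₀pos.le (by norm_num)
    simp only [hqdef]; linarith
  have hq1 : q < 1 := by
    have : 0 < ε * c₀ := mul_pos hε0 hc₀pos
    simp only [hqdef]; linarith
  -- the main invariant
  have H : ∀ t, (∀ k, m ≤ x t k ∧ x t k ≤ 1) ∧ x t i₀ = m ∧
      (∀ k, x t k - m ≤ q ^ t * (x 0 k - m)) := by
    intro t
    induction t with
    | zero =>
      exact ⟨fun k => ⟨hminle k, (hx0 k).2⟩, hi₀.symm, fun k => by simp⟩
    | succ t ih =>
      obtain ⟨hbnd, hfix, hcontr⟩ := ih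
      have step : ∀ k : Fin n, m ≤ x (t+1) k ∧ x (t+1) k - m ≤ q * (x t k - m) := by
        intro k
        rw [hrec t k]
        exact step_lemma n hn a b c d hca had hd hb ε hε0 hε1 m hm0 (x t) hbnd i₀ hfix k
      refine ⟨fun k => ⟨(step k).1, ?_⟩, ?_, fun k => ?_⟩
      · have h2 := (step k).2
        have hge := (hbnd k).1
        have hle := (hbnd k).2
        nlinarith [mul_nonneg (by linarith : (0:ℝ) ≤ 1 - q) (by linarith : (0:ℝ) ≤ x t k - m)]
      · have h2 := (step i₀).2
        rw [hfix] at h2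
        have h1 := (step i₀).1
        simp only [sub_self, mul_zero] at h2
        linarith
      · have h2 := (step k).2
        have := hcontr k
        have h3 : q * (x t k - m) ≤ q * (q ^ t * (x 0 k - m)) :=
          mul_le_mul_of_nonneg_left this hq0
        calc x (t+1) k - m ≤ q * (x t k - m) := h2
          _ ≤ q * (q ^ t * (x 0 k - m)) := h3
          _ = q ^ (t+1) * (x 0 k - m) := by rw [pow_succ]; ring
  -- squeeze
  have hpow : Filter.Tendsto (fun t : ℕ => q ^ t) Filter.atTop (nhds 0) :=
    tendsto_pow_atTop_nhds_zero_of_lt_one hq0 hq1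
  have hupperlim : Filter.Tendsto (fun t : ℕ => m + q ^ t * (x 0 i - m))
      Filter.atTop (nhds m) := by
    have := (hpow.mul_const (x 0 i - m)).const_add m
    simpa using this
  apply tendsto_of_tendsto_of_tendsto_of_le_of_le (tendsto_const_nhds) hupperlim
  · intro t
    exact ((H t).1 i).1
  · intro t
    dsimp only
    have := ((H t).2.2) i
    linarith
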